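/- Under the hypotheses of the weakly contractive fixed point theorem in ordered partial metric spaces, the Picard iterates x_n = f^n(x_0) with x_0 ≤ f(x_0) form a Cauchy sequence in (X,p), i.e., lim_{n,m→∞} p(x_n,x_m) = 0. -/

import Mathlib

/-!
The step distances `aₙ = p(xₙ₊₁, xₙ)` satisfy `aₙ₊₁ ≤ aₙ - ψ(aₙ)`, so they decrease to a limit `L`
with `ψ(L) = 0`, i.e. `L = 0`. Given `ε`, pick `N` with `a_N ≤ min (ε/2) (ψ(ε/2))`: then `f` maps
the points `z ≥ x_N` of the `p`-ball of radius `ε` around `x_N` into that ball (if `p(x_N, z) ≤ ε/2`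
the contraction keeps the distance below `a_N + ε/2`, otherwise it gains at least `ψ(ε/2) ≥ a_N`).
Hence every `xₙ` with `n ≥ N` lies in it, and the triangle inequality bounds `p(xₙ, xₘ)` by `2ε`.
-/

noncomputable section
open Filter Topology

def IsPartialMetric {X : Type*} (p : X → X → ℝ) : Prop :=
  (∀ x y, 0 ≤ p x y) ∧
  (∀ x y, x = y ↔ (p x x = p x y ∧ p x y = p y y)) ∧
  (∀ x y, p x x ≤ p x y) ∧
  (∀ x y, p x y = p y x) ∧
  (∀ x y z, p x y ≤ p x z + p z y - p z z)

/-- `u` converges to `x` in the partial metric space `(X, p)`. -/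
def PConvergesTo {X : Type*} (p : X → X → ℝ) (u : ℕ → X) (x : X) : Prop :=
  Tendsto (fun n => p (u n) x) atTop (𝓝 (p x x))

/-- `u` converges properly to `x` in `(X, p)`. -/
def PProperConvergesTo {X : Type*} (p : X → X → ℝ) (u : ℕ → X) (x : X) : Prop :=
  Tendsto (fun n => p (u n) x) atTop (𝓝 (p x x)) ∧
  Tendsto (fun n => p (u n) (u n)) atTop (𝓝 (p x x))

/-- `u` is a Cauchy sequence in `(X, p)`: `lim_{n,m} p (u n) (u m)` exists (finite). -/
def PCauchy {X : Type*} (p : X → X → ℝ) (u : ℕ → X) : Prop :=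
  ∃ l : ℝ, Tendsto (fun nm : ℕ × ℕ => p (u nm.1) (u nm.2)) atTop (𝓝 l)

/-- `(X, p)` is a complete partial metric space. -/
def PComplete {X : Type*} (p : X → X → ℝ) : Prop :=
  ∀ u : ℕ → X, ∀ l : ℝ,
    Tendsto (fun nm : ℕ × ℕ => p (u nm.1) (u nm.2)) atTop (𝓝 l) →
    ∃ x, p x x = l ∧ Tendsto (fun n => p (u n) x) atTop (𝓝 l)

/-- `f` is continuous on `(X, p)` (w.r.t. both `p` and the induced metric `pˢ`). -/
def PContinuousMap {X : Type*} (p : X → X → ℝ) (f : X → X) : Prop :=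
  ∀ (u : ℕ → X) (x : X),
    (PConvergesTo p u x → PConvergesTo p (fun n => f (u n)) (f x)) ∧
    (PProperConvergesTo p u x → PProperConvergesTo p (fun n => f (u n)) (f x))

namespace IsPartialMetric

variable {X : Type*} {p : X → X → ℝ}

theorem nonneg (hp : IsPartialMetric p) (x y : X) : 0 ≤ p x y := hp.1 x y

theorem self_le (hp : IsPartialMetric p) (x y : X) : p x x ≤ p x y := hp.2.2.1 x y

theorem comm (hp : IsPartialMetric p) (x y : X) : p x y = p y x := hp.2.2.2.1 x y

theorem triangle (hp : IsPartialMetric p) (x y z : X) : p x y ≤ p x z + p z y - p z z :=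
  hp.2.2.2.2 x y z

theorem le_add (hp : IsPartialMetric p) (x y z : X) : p x y ≤ p x z + p z y := by
  linarith [hp.triangle x y z, hp.nonneg z z]

theorem tendsto_zero_of_forall_exists_le {u : ℕ → X} (hp : IsPartialMetric p)
    (h : ∀ ε > 0, ∃ N, ∀ n ≥ N, p (u N) (u n) ≤ ε) :
    Tendsto (fun nm : ℕ × ℕ => p (u nm.1) (u nm.2)) atTop (𝓝 0) := by
  rw [Metric.tendsto_nhds]
  intro ε hε
  obtain ⟨N, hN⟩ := h (ε / 3) (by positivity)
  filter_upwards [Ici_mem_atTop (N, N)] with ⟨n, m⟩ ⟨hn, hm⟩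
  have hnm : p (u n) (u m) ≤ p (u N) (u n) + p (u N) (u m) :=
    (hp.le_add _ _ (u N)).trans_eq (by rw [hp.comm (u n)])
  rw [Real.dist_eq, sub_zero, abs_of_nonneg (hp.nonneg _ _)]
  linarith [hN n hn, hN m hm]

end IsPartialMetric

theorem tendsto_zero_of_succ_le_sub {a : ℕ → ℝ} {ψ : ℝ → ℝ} (ha : ∀ n, 0 ≤ a n)
    (hstep : ∀ n, a (n + 1) ≤ a n - ψ (a n)) (hψnn : ∀ t, 0 ≤ t → 0 ≤ ψ t)
    (hψm : MonotoneOn ψ (Set.Ici 0)) (hψpos : ∀ t, 0 < t → 0 < ψ t) :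
    Tendsto a atTop (𝓝 0) := by
  have hanti : Antitone a :=
    antitone_nat_of_succ_le fun n => by linarith [hstep n, hψnn _ (ha n)]
  have hbdd : BddBelow (Set.range a) := ⟨0, Set.forall_mem_range.2 ha⟩
  have hlim := tendsto_atTop_ciInf hanti hbdd
  set L := ⨅ n, a n
  suffices hL : L = 0 by rwa [hL] at hlim
  refine (le_ciInf ha).eq_or_lt.elim Eq.symm fun hL => absurd ?_ (hψpos L hL).not_ge
  have hgap : ∀ n, ψ L ≤ a n - a (n + 1) := fun n => by
    linarith [hψm hL.le (ha n) (ciInf_le hbdd n), hstep n]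
  have hdiff : Tendsto (fun n => a n - a (n + 1)) atTop (𝓝 0) := by
    simpa using hlim.sub (hlim.comp (tendsto_add_atTop_nat 1))
  exact ge_of_tendsto hdiff (Eventually.of_forall hgap)

section WeakContraction

variable {X : Type*} [PartialOrder X] {p : X → X → ℝ} {f : X → X} {ψ : ℝ → ℝ}

theorem IsPartialMetric.map_le_of_le (hp : IsPartialMetric p)
    (hcontr : ∀ x y : X, y ≤ x → p (f x) (f y) ≤ p x y - ψ (p x y))
    (hψnn : ∀ t, 0 ≤ t → 0 ≤ ψ t) (hψm : MonotoneOn ψ (Set.Ici 0)) {ε : ℝ} {y z : X}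
    (hyz : y ≤ z) (hy : p y (f y) ≤ min (ε / 2) (ψ (ε / 2))) (hz : p y z ≤ ε) :
    p y (f z) ≤ ε := by
  obtain ⟨hyε, hyψ⟩ := le_min_iff.1 hy
  have hfz : p y (f z) ≤ p y (f y) + (p y z - ψ (p y z)) := calc
    p y (f z) ≤ p y (f y) + p (f y) (f z) := hp.le_add _ _ _
    _ = p y (f y) + p (f z) (f y) := by rw [hp.comm (f y)]
    _ ≤ p y (f y) + (p z y - ψ (p z y)) := by gcongr; exact hcontr z y hyz
    _ = p y (f y) + (p y z - ψ (p y z)) := by rw [hp.comm z]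
  rcases le_or_gt (p y z) (ε / 2) with hnear | hfar
  · linarith [hψnn _ (hp.nonneg y z)]
  · have hε : 0 ≤ ε / 2 := (hp.nonneg _ _).trans hyε
    linarith [hψm hε (hp.nonneg y z) hfar.le]

theorem IsPartialMetric.iterate_le (hp : IsPartialMetric p) (hf : Monotone f)
    (hcontr : ∀ x y : X, y ≤ x → p (f x) (f y) ≤ p x y - ψ (p x y))
    (hψnn : ∀ t, 0 ≤ t → 0 ≤ ψ t) (hψm : MonotoneOn ψ (Set.Ici 0)) {ε : ℝ} {y : X}
    (hyf : y ≤ f y) (hy : p y (f y) ≤ min (ε / 2) (ψ (ε / 2))) (k : ℕ) :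
    p y (f^[k] y) ≤ ε := by
  induction k with
  | zero =>
    have hyε := hy.trans (min_le_left _ _)
    show p y y ≤ ε
    linarith [hp.nonneg y (f y), hp.self_le y (f y)]
  | succ k ih =>
    rw [Function.iterate_succ_apply']
    exact hp.map_le_of_le hcontr hψnn hψm (hf.monotone_iterate_of_le_map hyf k.zero_le) hy ih

end WeakContraction

theorem picard_is_cauchy_general {X : Type*} [PartialOrder X]
    (p : X → X → ℝ) (hp : IsPartialMetric p)
    (f : X → X) (hf : Monotone f)
    (ψ : ℝ → ℝ) (hψm : MonotoneOn ψ (Set.Ici 0))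
    (hψpos : ∀ t : ℝ, 0 < t → 0 < ψ t) (hψ0 : ψ 0 = 0)
    (hcontr : ∀ x y : X, y ≤ x → p (f x) (f y) ≤ p x y - ψ (p x y))
    (x₀ : X) (hx₀ : x₀ ≤ f x₀) :
    Tendsto (fun nm : ℕ × ℕ => p (f^[nm.1] x₀) (f^[nm.2] x₀)) atTop (𝓝 0) := by
  have hψnn : ∀ t, 0 ≤ t → 0 ≤ ψ t := fun t ht =>
    ht.eq_or_lt.elim (fun h => h ▸ hψ0.ge) fun h => (hψpos t h).le
  have horbit : Monotone fun n => f^[n] x₀ := hf.monotone_iterate_of_le_map hx₀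
  have hstep : Tendsto (fun n => p (f^[n] x₀) (f (f^[n] x₀))) atTop (𝓝 0) := by
    refine tendsto_zero_of_succ_le_sub (fun n => hp.nonneg _ _) (fun n => ?_) hψnn hψm hψpos
    have h := hcontr _ _ (horbit n.le_succ)
    simp only [Function.iterate_succ_apply'] at h ⊢
    rwa [hp.comm (f^[n] x₀), hp.comm (f (f^[n] x₀))]
  refine hp.tendsto_zero_of_forall_exists_le (u := fun n => f^[n] x₀) fun ε hε => ?_
  have hδ : 0 < min (ε / 2) (ψ (ε / 2)) := lt_min (by positivity) (hψpos _ (by positivity))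
  obtain ⟨N, hN⟩ := (hstep.eventually (gt_mem_nhds hδ)).exists
  refine ⟨N, fun n hn => ?_⟩
  obtain ⟨k, rfl⟩ := Nat.exists_eq_add_of_le hn
  rw [add_comm, Function.iterate_add_apply]
  have hNf : f^[N] x₀ ≤ f (f^[N] x₀) := by
    simpa only [Function.iterate_succ_apply'] using horbit N.le_succ
  exact hp.iterate_le hf hcontr hψnn hψm hNf hN.le k

theorem picard_is_cauchy {X : Type*} [PartialOrder X]
    (p : X → X → ℝ) (hp : IsPartialMetric p)
    (f : X → X) (hf : Monotone f)
    (ψ : ℝ → ℝ) (hψc : ContinuousOn ψ (Set.Ici 0)) (hψm : MonotoneOn ψ (Set.Ici 0))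
    (hψpos : ∀ t : ℝ, 0 < t → 0 < ψ t) (hψ0 : ψ 0 = 0)
    (hψtop : Tendsto ψ atTop atTop)
    (hcontr : ∀ x y : X, y ≤ x → p (f x) (f y) ≤ p x y - ψ (p x y))
    (x₀ : X) (hx₀ : x₀ ≤ f x₀) :
    Tendsto (fun nm : ℕ × ℕ => p (f^[nm.1] x₀) (f^[nm.2] x₀)) atTop (𝓝 0) :=
  picard_is_cauchy_general p hp f hf ψ hψm hψpos hψ0 hcontr x₀ hx₀
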